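/- Let o ∈ I, c > 0, C > 0, and let f : I → I be a map such that f restricted to I ∩ [-1/2, o) and f restricted to I ∩ (o, 1/2] are each injective and satisfy |f(u) − f(v)| ≥ c|u − v| for u, v on the same side of o. Then for every integer m ≥ 1 and every N > 0, the Lebesgue measure of the set { x ∈ I : Σ_{i=0}^{m-1} ( −C·log|f^i(x) − o| ) > N } is at most 2 e^{−N/(C m)} · Σ_{i=0}^{m-1} (2/c)^i, where the summand −C·log|f^i(x) − o| is interpreted as +∞ when f^i(x) = o. -/

import Mathlib

/-! If the sum exceeds `N`, one of its `m` terms exceeds `N / m`, so some `f^i x` lies within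
`ε = e^{-N/(Cm)}` of `o`. Each branch of `f` is `c`-expanding, so it pulls a set of diameter `d`
back to a set of diameter at most `d / c`; as `I` is covered by the two branches and the point `o`,
which contributes nothing, induction on `i` bounds the measure of `{x ∈ I | f^i x ∈ s}` by
`diam s · (2/c)^i`. Apply this to `s = (o - ε, o + ε)` and sum over `i < m`. -/

open MeasureTheory Set Filter Topology
open scoped ENNReal

noncomputable section

/-- The interval `I = [-1/2, 1/2] ⊆ ℝ`. -/
def I01 : Set ℝ := Set.Icc (-(1 / 2)) (1 / 2)

open Metric NNReal

lemma antilipschitzWith_domRestrict_of_mul_abs_sub_le {f : ℝ → ℝ} {s : Set ℝ} {c : ℝ}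
    (hc : 0 < c) (h : ∀ u ∈ s, ∀ v ∈ s, c * |u - v| ≤ |f u - f v|) :
    AntilipschitzWith (Real.toNNReal c⁻¹) (s.domRestrict f) := by
  refine AntilipschitzWith.of_le_mul_dist fun u v => ?_
  rw [Real.coe_toNNReal _ (inv_nonneg.2 hc.le), Subtype.dist_eq, Real.dist_eq, Real.dist_eq,
    domRestrict_apply, domRestrict_apply, inv_mul_eq_div, le_div_iff₀' hc]
  exact h u u.2 v v.2

lemma AntilipschitzWith.ediam_inter_preimage_le {α β : Type*} [PseudoEMetricSpace α]
    [PseudoEMetricSpace β] {K : ℝ≥0} {f : α → β} {s : Set α}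
    (hf : AntilipschitzWith K (s.domRestrict f)) (t : Set β) :
    ediam (s ∩ f ⁻¹' t) ≤ K * ediam t := by
  rw [← Subtype.image_preimage_coe, isometry_subtype_coe.ediam_image]
  exact hf.ediam_preimage_le t

theorem volume_inter_preimage_iterate_le {f : ℝ → ℝ} {K : ℝ≥0} {X L R : Set ℝ} {o : ℝ}
    (hX : MapsTo f X X) (hcover : X ⊆ L ∪ R ∪ {o})
    (hL : AntilipschitzWith K (L.domRestrict f)) (hR : AntilipschitzWith K (R.domRestrict f))
    (i : ℕ) (s : Set ℝ) :
    volume (X ∩ f^[i] ⁻¹' s) ≤ ediam s * (2 * K) ^ i := by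
  induction i generalizing s with
  | zero => simpa using (measure_mono inter_subset_right).trans (Real.volume_le_diam s)
  | succ i ih =>
    have hsplit : X ∩ f^[i + 1] ⁻¹' s ⊆ X ∩ f^[i] ⁻¹' (L ∩ f ⁻¹' s) ∪
        X ∩ f^[i] ⁻¹' (R ∩ f ⁻¹' s) ∪ X ∩ f^[i] ⁻¹' {o} := by
      rintro x ⟨hx, hxs⟩
      rw [mem_preimage, Function.iterate_succ_apply'] at hxs
      rcases hcover (hX.iterate i hx) with (hxL | hxR) | hxo
      · exact Or.inl (Or.inl ⟨hx, hxL, hxs⟩)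
      · exact Or.inl (Or.inr ⟨hx, hxR, hxs⟩)
      · exact Or.inr ⟨hx, hxo⟩
    have hbranch {B : Set ℝ} (hB : AntilipschitzWith K (B.domRestrict f)) :
        volume (X ∩ f^[i] ⁻¹' (B ∩ f ⁻¹' s)) ≤ K * ediam s * (2 * K) ^ i :=
      (ih _).trans (by gcongr; exact hB.ediam_inter_preimage_le s)
    calc volume (X ∩ f^[i + 1] ⁻¹' s)
        ≤ volume (X ∩ f^[i] ⁻¹' (L ∩ f ⁻¹' s)) + volume (X ∩ f^[i] ⁻¹' (R ∩ f ⁻¹' s)) +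
            volume (X ∩ f^[i] ⁻¹' {o}) :=
          (measure_mono hsplit).trans <|
            (measure_union_le _ _).trans (add_le_add_left (measure_union_le _ _) _)
      _ ≤ K * ediam s * (2 * K) ^ i + K * ediam s * (2 * K) ^ i + 0 := by
          gcongr
          · exact hbranch hL
          · exact hbranch hR
          · simpa using ih {o}
      _ = ediam s * (2 * K) ^ (i + 1) := by ring

lemma ENNReal.exists_ofReal_div_card_lt_of_ofReal_lt_sum {ι : Type*} (s : Finset ι)
    {a : ι → ℝ≥0∞} {t : ℝ} (h : ENNReal.ofReal t < ∑ i ∈ s, a i) :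
    ∃ i ∈ s, ENNReal.ofReal (t / s.card) < a i := by
  refine Finset.exists_lt_of_sum_lt (lt_of_le_of_lt ?_ h)
  rcases s.eq_empty_or_nonempty with rfl | hs
  · simp
  rw [Finset.sum_const, nsmul_eq_mul, ← ENNReal.ofReal_natCast,
    ← ENNReal.ofReal_mul (by positivity), mul_div_cancel₀ _ (by simpa using hs.ne_empty)]

lemma exists_abs_sub_lt_exp_of_ofReal_lt_sum_neg_mul_log {C N o : ℝ} (hC : 0 < C) {m : ℕ}
    {y : ℕ → ℝ} (h : ENNReal.ofReal N < ∑ i ∈ Finset.range m,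
      if y i = o then ∞ else ENNReal.ofReal (-C * Real.log |y i - o|)) :
    ∃ i ∈ Finset.range m, |y i - o| < Real.exp (-N / (C * m)) := by
  obtain ⟨i, hi, hlt⟩ := ENNReal.exists_ofReal_div_card_lt_of_ofReal_lt_sum _ h
  refine ⟨i, hi, ?_⟩
  rw [Finset.card_range] at hlt
  by_cases hyo : y i = o
  · simpa [hyo] using Real.exp_pos _
  rw [if_neg hyo, ENNReal.ofReal_lt_ofReal_iff'] at hlt
  rw [← Real.log_lt_iff_lt_exp (abs_pos.2 (sub_ne_zero.2 hyo)), mul_comm, ← div_div,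
    lt_div_iff₀ hC, neg_div]
  linarith [hlt.1]

theorem measure_large_birkhoff_log_sum_general
    (o c C : ℝ) (hc : 0 < c) (hC : 0 < C)
    (f : ℝ → ℝ) (hmaps : Set.MapsTo f I01 I01)
    (hexpL : ∀ u ∈ I01 ∩ Set.Ico (-(1 / 2)) o, ∀ v ∈ I01 ∩ Set.Ico (-(1 / 2)) o,
      c * |u - v| ≤ |f u - f v|)
    (hexpR : ∀ u ∈ I01 ∩ Set.Ioc o (1 / 2), ∀ v ∈ I01 ∩ Set.Ioc o (1 / 2),
      c * |u - v| ≤ |f u - f v|)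
    (m : ℕ) (N : ℝ) :
    volume {x ∈ I01 |
        ENNReal.ofReal N < ∑ i ∈ Finset.range m,
          (if f^[i] x = o then (⊤ : ℝ≥0∞)
            else ENNReal.ofReal (-C * Real.log |f^[i] x - o|))} ≤
      ENNReal.ofReal (2 * Real.exp (-N / (C * m)) * ∑ i ∈ Finset.range m, (2 / c) ^ i) := by
  set ε := Real.exp (-N / (C * m))
  have hcover : I01 ⊆ I01 ∩ Ico (-(1 / 2)) o ∪ I01 ∩ Ioc o (1 / 2) ∪ {o} := by
    intro x hx
    rcases lt_trichotomy x o with h | rfl | h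
    exacts [Or.inl (Or.inl ⟨hx, hx.1, h⟩), Or.inr rfl, Or.inl (Or.inr ⟨hx, h, hx.2⟩)]
  calc _ ≤ volume (⋃ i ∈ Finset.range m, I01 ∩ f^[i] ⁻¹' ball o ε) := measure_mono ?_
    _ ≤ ∑ i ∈ Finset.range m, volume (I01 ∩ f^[i] ⁻¹' ball o ε) := measure_biUnion_finset_le _ _
    _ ≤ ∑ i ∈ Finset.range m, ediam (ball o ε) * (2 * Real.toNNReal c⁻¹) ^ i :=
        Finset.sum_le_sum fun i _ => volume_inter_preimage_iterate_le hmaps hcover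
          (antilipschitzWith_domRestrict_of_mul_abs_sub_le hc hexpL)
          (antilipschitzWith_domRestrict_of_mul_abs_sub_le hc hexpR) i _
    _ = _ := by
      have h2K : (2 * Real.toNNReal c⁻¹ : ℝ≥0∞) = ENNReal.ofReal (2 / c) := by
        rw [div_eq_mul_inv, ENNReal.ofReal_mul zero_le_two, ENNReal.ofReal_ofNat]
        rfl
      rw [Real.ball_eq_Ioo, Real.ediam_Ioo, Finset.mul_sum,
        ENNReal.ofReal_sum_of_nonneg fun i _ => by positivity]
      refine Finset.sum_congr rfl fun i _ => ?_
      rw [ENNReal.ofReal_mul (by positivity), ENNReal.ofReal_pow (by positivity), h2K,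
        add_sub_sub_cancel, ← two_mul]
  rintro x ⟨hx, hsum⟩
  obtain ⟨i, hi, hclose⟩ :=
    exists_abs_sub_lt_exp_of_ofReal_lt_sum_neg_mul_log (y := fun i => f^[i] x) hC hsum
  exact mem_biUnion hi ⟨hx, by rwa [mem_preimage, mem_ball, Real.dist_eq]⟩

/-- If `f : I → I` is injective and `c`-expanding on each of the two branches
`I ∩ [-1/2, o)` and `I ∩ (o, 1/2]`, then for every `m ≥ 1` and `N > 0` the Lebesgue measure of
the set where `Σ_{i<m} (−C·log|f^i(x) − o|) > N` is at most
`2 e^{−N/(Cm)} Σ_{i<m} (2/c)^i`; terms with `f^i(x) = o` are interpreted as `+∞`. -/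
theorem measure_large_birkhoff_log_sum
    (o c C : ℝ) (ho : o ∈ I01) (hc : 0 < c) (hC : 0 < C)
    (f : ℝ → ℝ) (hmaps : Set.MapsTo f I01 I01)
    (hinjL : Set.InjOn f (I01 ∩ Set.Ico (-(1 / 2)) o))
    (hexpL : ∀ u ∈ I01 ∩ Set.Ico (-(1 / 2)) o, ∀ v ∈ I01 ∩ Set.Ico (-(1 / 2)) o,
      c * |u - v| ≤ |f u - f v|)
    (hinjR : Set.InjOn f (I01 ∩ Set.Ioc o (1 / 2)))
    (hexpR : ∀ u ∈ I01 ∩ Set.Ioc o (1 / 2), ∀ v ∈ I01 ∩ Set.Ioc o (1 / 2),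
      c * |u - v| ≤ |f u - f v|)
    (m : ℕ) (hm : 1 ≤ m) (N : ℝ) (hN : 0 < N) :
    volume {x ∈ I01 |
        ENNReal.ofReal N < ∑ i ∈ Finset.range m,
          (if f^[i] x = o then (⊤ : ℝ≥0∞)
            else ENNReal.ofReal (-C * Real.log |f^[i] x - o|))} ≤
      ENNReal.ofReal (2 * Real.exp (-N / (C * m)) * ∑ i ∈ Finset.range m, (2 / c) ^ i) :=
  measure_large_birkhoff_log_sum_general o c C hc hC f hmaps hexpL hexpR m N
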